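/- Let ‖·‖* be a Barabanov norm for the irreducible matrix set 𝒜 and let ‖·‖°_n be the normalized norms produced by the max-relaxation iteration. Then for every n ≥ 0 and every x ∈ ℝ^m, (1/ecc(‖·‖_0, ‖·‖*)) · ‖x‖*/‖e‖* ≤ ‖x‖°_n ≤ ecc(‖·‖_0, ‖·‖*) · ‖x‖*/‖e‖*; in particular the family of norms {‖·‖°_n} is uniformly bounded and equicontinuous on every bounded subset of ℝ^m. -/

import Mathlib

/-!
The Barabanov identity `max_i ‖A_i x‖* = ρ ‖x‖*` makes the class of functions `N` with
`c e⁻ ‖·‖* ≤ N ≤ c e⁺ ‖·‖*` for some `c > 0`, where `e^∓ = e^∓(‖·‖_0, ‖·‖*)`, invariant under the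
relaxation step `N ↦ max (N, γ⁻¹ max_i N (A_i ·))`: only `c` changes, to `c max (1, ρ / γ)`.
The initial norm lies in this class with `c = 1`, hence so does every `‖·‖_n`, and the factor `c`
cancels in `‖x‖_n / ‖e‖_n`, which is therefore pinched between `ecc⁻¹ ‖x‖*/‖e‖*` and
`ecc ‖x‖*/‖e‖*`. Applied to `|‖x‖_n - ‖y‖_n| ≤ ‖x - y‖_n`, the same bound gives a Lipschitz
constant for `‖·‖°_n` that does not depend on `n`.
-/

open Matrix Filter Topology Bornology Pointwise

/-- `N` is a norm on `ℝ^m`: nonnegative, definite, absolutely homogeneous, subadditive. -/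
def IsNorm {m : ℕ} (N : (Fin m → ℝ) → ℝ) : Prop :=
  (∀ x, 0 ≤ N x) ∧ (∀ x, N x = 0 → x = 0) ∧
    (∀ (t : ℝ) (x), N (t • x) = |t| * N x) ∧ (∀ x y, N (x + y) ≤ N x + N y)

/-- `N` is a seminorm on `ℝ^m`. -/
def IsSeminorm {m : ℕ} (N : (Fin m → ℝ) → ℝ) : Prop :=
  (∀ x, 0 ≤ N x) ∧
    (∀ (t : ℝ) (x), N (t • x) = |t| * N x) ∧ (∀ x y, N (x + y) ≤ N x + N y)

/-- The family `A` is irreducible: the matrices have no common invariant subspace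
other than `⊥` and `⊤`. -/
def IsIrreducibleFamily {m r : ℕ} (A : Fin r → Matrix (Fin m) (Fin m) ℝ) : Prop :=
  ∀ W : Submodule ℝ (Fin m → ℝ), (∀ i, ∀ x ∈ W, (A i).mulVec x ∈ W) → W = ⊥ ∨ W = ⊤

/-- The operator norm of a matrix acting on `ℝ^m` (with its sup norm). -/
noncomputable def matNorm {m : ℕ} (M : Matrix (Fin m) (Fin m) ℝ) : ℝ :=
  ‖LinearMap.toContinuousLinearMap M.mulVecLin‖

/-- The joint spectral radius of the family `A`:
`limsup_n (max over words of length n of the norm of the product)^(1/n)`. -/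
noncomputable def jsr {m r : ℕ} (A : Fin r → Matrix (Fin m) (Fin m) ℝ) : ℝ :=
  Filter.atTop.limsup fun n : ℕ =>
    (⨆ w : Fin n → Fin r, matNorm (List.ofFn fun k => A (w k)).prod) ^ (1 / (n : ℝ))

/-- `maxA A N x = max_i N (A_i x)`. -/
noncomputable def maxA {m r : ℕ} (A : Fin r → Matrix (Fin m) (Fin m) ℝ)
    (N : (Fin m → ℝ) → ℝ) (x : Fin m → ℝ) : ℝ :=
  ⨆ i, N ((A i).mulVec x)

/-- `ρ⁺ = max_{x ≠ 0} (max_i N (A_i x)) / N x`. -/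
noncomputable def rhoSup {m r : ℕ} (A : Fin r → Matrix (Fin m) (Fin m) ℝ)
    (N : (Fin m → ℝ) → ℝ) : ℝ :=
  sSup ((fun x => maxA A N x / N x) '' {x | x ≠ 0})

/-- `ρ⁻ = min_{x ≠ 0} (max_i N (A_i x)) / N x`. -/
noncomputable def rhoInf {m r : ℕ} (A : Fin r → Matrix (Fin m) (Fin m) ℝ)
    (N : (Fin m → ℝ) → ℝ) : ℝ :=
  sInf ((fun x => maxA A N x / N x) '' {x | x ≠ 0})

/-- An averaging function: continuous on positives, `γ t t = t`, and strictly
between `min` and `max` off the diagonal. -/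
def IsAveraging (γ : ℝ → ℝ → ℝ) : Prop :=
  ContinuousOn (fun p : ℝ × ℝ => γ p.1 p.2) {p | 0 < p.1 ∧ 0 < p.2} ∧
    (∀ t, 0 < t → γ t t = t) ∧
    ∀ t s, 0 < t → 0 < s → t ≠ s → min t s < γ t s ∧ γ t s < max t s

/-- The max-relaxation iteration: `‖x‖_{n+1} = max (‖x‖_n, γ_n⁻¹ max_i ‖A_i x‖_n)`
where `γ_n = γ (ρ⁻_n, ρ⁺_n)`. -/
noncomputable def iterN {m r : ℕ} (A : Fin r → Matrix (Fin m) (Fin m) ℝ)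
    (γ : ℝ → ℝ → ℝ) (N0 : (Fin m → ℝ) → ℝ) : ℕ → (Fin m → ℝ) → ℝ
  | 0 => N0
  | n + 1 => fun x =>
      max (iterN A γ N0 n x)
        ((γ (rhoInf A (iterN A γ N0 n)) (rhoSup A (iterN A γ N0 n)))⁻¹ *
          maxA A (iterN A γ N0 n) x)

/-- The normalized norms `‖x‖°_n = ‖x‖_n / ‖e‖_n` of the max-relaxation iteration
(for `n = 0` this equals `‖x‖_0` since `‖e‖_0 = 1`). -/
noncomputable def iterNnorm {m r : ℕ} (A : Fin r → Matrix (Fin m) (Fin m) ℝ)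
    (γ : ℝ → ℝ → ℝ) (N0 : (Fin m → ℝ) → ℝ) (e : Fin m → ℝ) (n : ℕ) :
    (Fin m → ℝ) → ℝ :=
  fun x => iterN A γ N0 n x / iterN A γ N0 n e

/-- `e⁺(N, N') = max_{x ≠ 0} N x / N' x`. -/
noncomputable def ePlus {m : ℕ} (N N' : (Fin m → ℝ) → ℝ) : ℝ :=
  sSup ((fun x => N x / N' x) '' {x | x ≠ 0})

/-- `e⁻(N, N') = min_{x ≠ 0} N x / N' x`. -/
noncomputable def eMinus {m : ℕ} (N N' : (Fin m → ℝ) → ℝ) : ℝ :=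
  sInf ((fun x => N x / N' x) '' {x | x ≠ 0})

/-- The eccentricity of the norm `N` with respect to the norm `N'`. -/
noncomputable def ecc {m : ℕ} (N N' : (Fin m → ℝ) → ℝ) : ℝ :=
  ePlus N N' / eMinus N N'

variable {m : ℕ}

namespace IsSeminorm

variable {N : (Fin m → ℝ) → ℝ}

lemma map_zero (h : IsSeminorm N) : N 0 = 0 := by
  simpa using h.2.1 0 0

lemma map_neg (h : IsSeminorm N) (x : Fin m → ℝ) : N (-x) = N x := by
  simpa using h.2.1 (-1) x

lemma abs_sub_le (h : IsSeminorm N) (x y : Fin m → ℝ) : |N x - N y| ≤ N (x - y) := by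
  rw [abs_sub_le_iff]
  constructor
  · simpa using h.2.2 (x - y) y
  · simpa [← h.map_neg (x - y)] using h.2.2 (y - x) x

lemma sum_le (h : IsSeminorm N) {ι : Type*} (s : Finset ι) (f : ι → Fin m → ℝ) :
    N (∑ i ∈ s, f i) ≤ ∑ i ∈ s, N (f i) := by
  classical
  induction s using Finset.induction_on with
  | empty => simp [h.map_zero]
  | insert i s hi ih =>
    rw [Finset.sum_insert hi, Finset.sum_insert hi]
    exact (h.2.2 _ _).trans (by gcongr)

lemma le_mul_norm (h : IsSeminorm N) (x : Fin m → ℝ) :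
    N x ≤ (∑ i, N (Pi.single i 1)) * ‖x‖ := by
  have hx : ∑ i, x i • (Pi.single i 1 : Fin m → ℝ) = x := by
    ext j
    simp [Pi.single_apply]
  calc N x = N (∑ i, x i • Pi.single i 1) := by rw [hx]
    _ ≤ ∑ i, N (x i • Pi.single i 1) := h.sum_le _ _
    _ = ∑ i, |x i| * N (Pi.single i 1) := by simp only [h.2.1]
    _ ≤ ∑ i, ‖x‖ * N (Pi.single i 1) := by
        gcongr with i
        · exact h.1 _
        · exact norm_le_pi_norm x i
    _ = (∑ i, N (Pi.single i 1)) * ‖x‖ := by rw [Finset.sum_mul]; simp only [mul_comm]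

lemma continuous (h : IsSeminorm N) : Continuous N := by
  have hC : 0 ≤ ∑ i, N (Pi.single i 1) := Finset.sum_nonneg fun i _ => h.1 _
  refine (LipschitzWith.of_dist_le_mul (K := ⟨_, hC⟩) fun x y => ?_).continuous
  rw [Real.dist_eq, dist_eq_norm]
  exact (h.abs_sub_le x y).trans (h.le_mul_norm _)

lemma bddAbove_image (h : IsSeminorm N) {S : Set (Fin m → ℝ)} (hS : IsBounded S) :
    BddAbove (N '' S) :=
  (hS.isCompact_closure.bddAbove_image h.continuous.continuousOn).mono
    (Set.image_mono subset_closure)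

end IsSeminorm

def ScaledBetween (a b : ℝ) (M N : (Fin m → ℝ) → ℝ) : Prop :=
  ∃ c > 0, ∀ x, c * a * M x ≤ N x ∧ N x ≤ c * b * M x

namespace IsNorm

variable {N N' : (Fin m → ℝ) → ℝ}

lemma isSeminorm (h : IsNorm N) : IsSeminorm N := ⟨h.1, h.2.2.1, h.2.2.2⟩

lemma pos (h : IsNorm N) {x : Fin m → ℝ} (hx : x ≠ 0) : 0 < N x :=
  (h.1 x).lt_of_ne fun h0 => hx (h.2.1 x h0.symm)

lemma div_smul (hN : IsNorm N) (hN' : IsNorm N') {t : ℝ} (ht : t ≠ 0) (x : Fin m → ℝ) :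
    N (t • x) / N' (t • x) = N x / N' x := by
  rw [hN.2.2.1, hN'.2.2.1, mul_div_mul_left _ _ (abs_ne_zero.2 ht)]

/-- By homogeneity `N / N'` takes on `x ≠ 0` exactly its values on the unit sphere, where it is
continuous and positive. -/
lemma exists_div_bounds [Nonempty (Fin m)] (hN : IsNorm N) (hN' : IsNorm N') :
    ∃ lo > 0, ∃ hi, ∀ x ≠ 0, lo ≤ N x / N' x ∧ N x / N' x ≤ hi := by
  have hS0 : ∀ x ∈ Metric.sphere (0 : Fin m → ℝ) 1, x ≠ 0 := fun x hx =>
    ne_zero_of_mem_sphere one_ne_zero ⟨x, hx⟩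
  have hcont : ContinuousOn (fun x => N x / N' x) (Metric.sphere 0 1) :=
    hN.isSeminorm.continuous.continuousOn.div hN'.isSeminorm.continuous.continuousOn
      fun x hx => (hN'.pos (hS0 x hx)).ne'
  have hne : (Metric.sphere (0 : Fin m → ℝ) 1).Nonempty :=
    NormedSpace.sphere_nonempty.2 zero_le_one
  obtain ⟨z, hz, hmin⟩ := (isCompact_sphere 0 1).exists_isMinOn hne hcont
  obtain ⟨w, -, hmax⟩ := (isCompact_sphere 0 1).exists_isMaxOn hne hcont
  refine ⟨N z / N' z, div_pos (hN.pos (hS0 z hz)) (hN'.pos (hS0 z hz)), N w / N' w,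
    fun x hx => ?_⟩
  have hxS : ‖x‖⁻¹ • x ∈ Metric.sphere (0 : Fin m → ℝ) 1 := by
    simp [norm_smul, norm_ne_zero_iff.2 hx]
  rw [← hN.div_smul hN' (inv_ne_zero (norm_ne_zero_iff.2 hx)) x]
  exact ⟨hmin hxS, hmax hxS⟩

lemma eMinus_pos [Nonempty (Fin m)] (hN : IsNorm N) (hN' : IsNorm N') : 0 < eMinus N N' := by
  obtain ⟨lo, hlo, hi, hbounds⟩ := hN.exists_div_bounds hN'
  obtain ⟨x, hx⟩ := exists_ne (0 : Fin m → ℝ)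
  refine hlo.trans_le (le_csInf ⟨_, x, hx, rfl⟩ ?_)
  rintro _ ⟨y, hy, rfl⟩
  exact (hbounds y hy).1

lemma scaledBetween_eMinus_ePlus [Nonempty (Fin m)] (hN : IsNorm N) (hN' : IsNorm N') :
    ScaledBetween (eMinus N N') (ePlus N N') N' N := by
  refine ⟨1, one_pos, fun x => ?_⟩
  simp only [one_mul]
  rcases eq_or_ne x 0 with rfl | hx
  · simp [hN.isSeminorm.map_zero, hN'.isSeminorm.map_zero]
  obtain ⟨lo, -, hi, hbounds⟩ := hN.exists_div_bounds hN'
  have hbdd : BddAbove ((fun x => N x / N' x) '' {x | x ≠ 0}) := by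
    refine ⟨hi, ?_⟩
    rintro _ ⟨y, hy, rfl⟩
    exact (hbounds y hy).2
  have hbdd' : BddBelow ((fun x => N x / N' x) '' {x | x ≠ 0}) := by
    refine ⟨0, ?_⟩
    rintro _ ⟨y, -, rfl⟩
    exact div_nonneg (hN.1 y) (hN'.1 y)
  have hx' := hN'.pos hx
  exact ⟨(le_div_iff₀ hx').1 (csInf_le hbdd' ⟨x, hx, rfl⟩),
    (div_le_iff₀ hx').1 (le_csSup hbdd ⟨x, hx, rfl⟩)⟩

end IsNorm

section MaxA

variable {r : ℕ} (A : Fin r → Matrix (Fin m) (Fin m) ℝ) {N M : (Fin m → ℝ) → ℝ}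

lemma maxA_nonneg (hN : ∀ x, 0 ≤ N x) (x : Fin m → ℝ) : 0 ≤ maxA A N x :=
  Real.iSup_nonneg fun _ => hN _

lemma maxA_mono (h : ∀ x, N x ≤ M x) (x : Fin m → ℝ) : maxA A N x ≤ maxA A M x :=
  ciSup_mono (Finite.bddAbove_range _) fun _ => h _

lemma maxA_const_mul {c : ℝ} (hc : 0 ≤ c) (x : Fin m → ℝ) :
    maxA A (fun y => c * N y) x = c * maxA A N x :=
  (Real.mul_iSup_of_nonneg hc _).symm

lemma isSeminorm_maxA (hN : IsSeminorm N) : IsSeminorm (maxA A N) := by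
  have hle : ∀ i x, N ((A i).mulVec x) ≤ maxA A N x := fun i x =>
    le_ciSup (Finite.bddAbove_range fun j => N ((A j).mulVec x)) i
  refine ⟨maxA_nonneg A hN.1, fun t x => ?_, fun x y => ?_⟩
  · simp only [maxA, Matrix.mulVec_smul, hN.2.1, Real.mul_iSup_of_nonneg (abs_nonneg t)]
  · refine Real.iSup_le (fun i => ?_) (add_nonneg (maxA_nonneg A hN.1 x) (maxA_nonneg A hN.1 y))
    rw [Matrix.mulVec_add]
    exact (hN.2.2 _ _).trans (add_le_add (hle i x) (hle i y))

end MaxA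

/-- For `g ≤ 0` the second term never exceeds the first. -/
lemma IsSeminorm.max_mul {N M : (Fin m → ℝ) → ℝ} (hN : IsSeminorm N) (hM : IsSeminorm M)
    (g : ℝ) : IsSeminorm fun x => max (N x) (g * M x) := by
  rcases le_or_gt g 0 with hg | hg
  · have hmax : ∀ x, max (N x) (g * M x) = N x := fun x =>
      max_eq_left ((mul_nonpos_of_nonpos_of_nonneg hg (hM.1 x)).trans (hN.1 x))
    simpa only [hmax] using hN
  · refine ⟨fun x => (hN.1 x).trans (le_max_left _ _), fun t x => ?_, fun x y => ?_⟩
    · dsimp only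
      rw [hN.2.1, hM.2.1, mul_left_comm, mul_max_of_nonneg _ _ (abs_nonneg t)]
    · refine max_le ((hN.2.2 x y).trans (add_le_add (le_max_left _ _) (le_max_left _ _))) ?_
      calc g * M (x + y) ≤ g * M x + g * M y := by
            rw [← mul_add]; exact mul_le_mul_of_nonneg_left (hM.2.2 x y) hg.le
        _ ≤ _ := add_le_add (le_max_right _ _) (le_max_right _ _)

namespace ScaledBetween

variable {a b : ℝ} {M N : (Fin m → ℝ) → ℝ}

lemma le (h : ScaledBetween a b M N) {e : Fin m → ℝ} (he : 0 < M e) : a ≤ b := by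
  obtain ⟨c, hc, hN⟩ := h
  nlinarith [(hN e).1.trans (hN e).2, mul_pos hc he]

/-- The common factor `c` of `N` becomes `c * max 1 (g * ρ)`. -/
lemma max_mul_maxA {r : ℕ} {A : Fin r → Matrix (Fin m) (Fin m) ℝ} {ρ : ℝ} (hρ : 0 ≤ ρ)
    (hMeig : ∀ x, ρ * M x = maxA A M x) (hM : ∀ x, 0 ≤ M x) (ha : 0 ≤ a) (hb : 0 ≤ b)
    (h : ScaledBetween a b M N) (g : ℝ) :
    ScaledBetween a b M fun x => max (N x) (g * maxA A N x) := by
  obtain ⟨c, hc, hN⟩ := h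
  have hlo : ∀ x, c * a * (ρ * M x) ≤ maxA A N x := fun x => by
    rw [hMeig, ← maxA_const_mul A (by positivity)]
    exact maxA_mono A (fun y => (hN y).1) x
  have hhi : ∀ x, maxA A N x ≤ c * b * (ρ * M x) := fun x => by
    rw [hMeig, ← maxA_const_mul A (by positivity)]
    exact maxA_mono A (fun y => (hN y).2) x
  refine ⟨c * max 1 (g * ρ), by positivity, fun x => ⟨?_, max_le ?_ ?_⟩⟩
  · rcases le_total (g * ρ) 1 with hgρ | hgρ
    · rw [max_eq_left hgρ, mul_one]
      exact (hN x).1.trans (le_max_left _ _)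
    · have hg : 0 ≤ g := by
        by_contra! hg
        linarith [mul_nonpos_of_nonpos_of_nonneg hg.le hρ]
      rw [max_eq_right hgρ]
      calc c * (g * ρ) * a * M x = g * (c * a * (ρ * M x)) := by ring
        _ ≤ g * maxA A N x := mul_le_mul_of_nonneg_left (hlo x) hg
        _ ≤ _ := le_max_right _ _
  · calc N x ≤ c * b * M x := (hN x).2
      _ ≤ c * max 1 (g * ρ) * b * M x := by
          have := hM x
          gcongr
          exact le_mul_of_one_le_right hc.le (le_max_left _ _)
  · rcases le_or_gt g 0 with hg | hg
    · have hmaxA : 0 ≤ maxA A N x := le_trans (by have := hM x; positivity) (hlo x)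
      have := hM x
      exact (mul_nonpos_of_nonpos_of_nonneg hg hmaxA).trans (by positivity)
    · calc g * maxA A N x ≤ g * (c * b * (ρ * M x)) := mul_le_mul_of_nonneg_left (hhi x) hg.le
        _ = c * (g * ρ) * b * M x := by ring
        _ ≤ c * max 1 (g * ρ) * b * M x := by
            have := hM x
            gcongr
            exact le_max_right _ _

lemma div_bounds (h : ScaledBetween a b M N) (ha : 0 < a) (hM : ∀ x, 0 ≤ M x) {e : Fin m → ℝ}
    (he : 0 < M e) (x : Fin m → ℝ) :
    (b / a)⁻¹ * (M x / M e) ≤ N x / N e ∧ N x / N e ≤ b / a * (M x / M e) := by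
  have hb : 0 < b := ha.trans_le (h.le he)
  obtain ⟨c, hc, hN⟩ := h
  have hMx := hM x
  have hNe : 0 < N e := (by positivity : 0 < c * a * M e).trans_le (hN e).1
  constructor
  · calc (b / a)⁻¹ * (M x / M e) = c * a * M x / (c * b * M e) := by field_simp
      _ ≤ N x / N e :=
          div_le_div₀ ((by positivity : 0 ≤ c * a * M x).trans (hN x).1) (hN x).1 hNe (hN e).2
  · calc N x / N e ≤ c * b * M x / (c * a * M e) :=
          div_le_div₀ (by positivity) (hN x).2 (by positivity) (hN e).1
      _ = b / a * (M x / M e) := by field_simp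

lemma dist_div_le (hN : IsSeminorm N) (h : ScaledBetween a b M N) (ha : 0 < a)
    (hM : ∀ x, 0 ≤ M x) {e : Fin m → ℝ} (he : 0 < M e) (x y : Fin m → ℝ) :
    dist (N x / N e) (N y / N e) ≤ b / a * (M (x - y) / M e) :=
  calc dist (N x / N e) (N y / N e) = |N x - N y| / N e := by
        rw [Real.dist_eq, ← sub_div, abs_div, abs_of_nonneg (hN.1 e)]
    _ ≤ N (x - y) / N e := div_le_div_of_nonneg_right (hN.abs_sub_le x y) (hN.1 e)
    _ ≤ b / a * (M (x - y) / M e) := (h.div_bounds ha hM he (x - y)).2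

lemma uniformEquicontinuous_div {ι : Type*} {N : ι → (Fin m → ℝ) → ℝ}
    (hN : ∀ i, IsSeminorm (N i)) (hM : IsSeminorm M) (h : ∀ i, ScaledBetween a b M (N i))
    (ha : 0 < a) {e : Fin m → ℝ} (he : 0 < M e) :
    UniformEquicontinuous fun i x => N i x / N i e := by
  set C := ∑ j, M (Pi.single j 1)
  refine LipschitzWith.uniformEquicontinuous _ (b / a * C / M e).toNNReal fun i =>
    LipschitzWith.of_dist_le_mul fun x y => ?_
  have hb : 0 ≤ b := ha.le.trans ((h i).le he)
  calc dist (N i x / N i e) (N i y / N i e) ≤ b / a * (M (x - y) / M e) :=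
        (h i).dist_div_le (hN i) ha hM.1 he x y
    _ ≤ b / a * (C * ‖x - y‖ / M e) := by
        gcongr
        exact hM.le_mul_norm _
    _ = b / a * C / M e * dist x y := by rw [dist_eq_norm]; ring
    _ ≤ _ := mul_le_mul_of_nonneg_right (Real.le_coe_toNNReal _) dist_nonneg

end ScaledBetween

section Iteration

variable {r : ℕ} (A : Fin r → Matrix (Fin m) (Fin m) ℝ) (γ : ℝ → ℝ → ℝ)
  {N0 : (Fin m → ℝ) → ℝ}

lemma isSeminorm_iterN (h0 : IsSeminorm N0) : ∀ n, IsSeminorm (iterN A γ N0 n)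
  | 0 => h0
  | n + 1 => (isSeminorm_iterN h0 n).max_mul (isSeminorm_maxA A (isSeminorm_iterN h0 n)) _

lemma scaledBetween_iterN {a b ρ : ℝ} {M : (Fin m → ℝ) → ℝ} (hρ : 0 ≤ ρ)
    (hMeig : ∀ x, ρ * M x = maxA A M x) (hM : ∀ x, 0 ≤ M x) (ha : 0 ≤ a) (hb : 0 ≤ b)
    (h0 : ScaledBetween a b M N0) : ∀ n, ScaledBetween a b M (iterN A γ N0 n)
  | 0 => h0
  | n + 1 => (scaledBetween_iterN hρ hMeig hM ha hb h0 n).max_mul_maxA hρ hMeig hM ha hb _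

end Iteration

theorem stmt6_general {m r : ℕ}
    (A : Fin r → Matrix (Fin m) (Fin m) ℝ)
    (γ : ℝ → ℝ → ℝ)
    (N0 : (Fin m → ℝ) → ℝ) (hN0 : IsNorm N0)
    (e : Fin m → ℝ) (he : N0 e = 1)
    (Nstar : (Fin m → ℝ) → ℝ) (hNs : IsNorm Nstar)
    (hbar : ∀ x, jsr A * Nstar x = maxA A Nstar x) :
    (∀ (n : ℕ) (x : Fin m → ℝ),
        (ecc N0 Nstar)⁻¹ * (Nstar x / Nstar e) ≤ iterNnorm A γ N0 e n x ∧
          iterNnorm A γ N0 e n x ≤ ecc N0 Nstar * (Nstar x / Nstar e)) ∧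
      ∀ S : Set (Fin m → ℝ), IsBounded S →
        (∃ C : ℝ, ∀ (n : ℕ), ∀ x ∈ S, iterNnorm A γ N0 e n x ≤ C) ∧
          EquicontinuousOn (fun n : ℕ => iterNnorm A γ N0 e n) S := by
  have he0 : e ≠ 0 := by
    rintro rfl
    simp [hN0.isSeminorm.map_zero] at he
  have : Nonempty (Fin m) := not_isEmpty_iff.1 fun _ => he0 (Subsingleton.elim _ _)
  have hNse : 0 < Nstar e := hNs.pos he0
  have ha : 0 < eMinus N0 Nstar := hN0.eMinus_pos hNs
  have h0 := hN0.scaledBetween_eMinus_ePlus hNs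
  have hb : 0 ≤ ePlus N0 Nstar := ha.le.trans (h0.le hNse)
  have hρ : 0 ≤ jsr A :=
    nonneg_of_mul_nonneg_left ((maxA_nonneg A hNs.1 e).trans_eq (hbar e).symm) hNse
  have hscaled := scaledBetween_iterN A γ hρ hbar hNs.1 ha.le hb h0
  have hbounds n := (hscaled n).div_bounds ha hNs.1 hNse
  have hequi := ScaledBetween.uniformEquicontinuous_div (isSeminorm_iterN A γ hN0.isSeminorm)
    hNs.isSeminorm hscaled ha hNse
  refine ⟨hbounds, fun S hS => ⟨?_, hequi.equicontinuous.equicontinuousOn S⟩⟩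
  obtain ⟨B, hB⟩ := hNs.isSeminorm.bddAbove_image hS
  refine ⟨ecc N0 Nstar * (B / Nstar e), fun n x hx => (hbounds n x).2.trans ?_⟩
  exact mul_le_mul_of_nonneg_left (div_le_div_of_nonneg_right (hB ⟨x, hx, rfl⟩) hNse.le)
    (div_nonneg hb ha.le)

/-- the normalized norms `‖·‖°_n` are sandwiched between
`ecc(‖·‖_0,‖·‖*)⁻¹·‖x‖*/‖e‖*` and `ecc(‖·‖_0,‖·‖*)·‖x‖*/‖e‖*`; in particular the family
`{‖·‖°_n}` is uniformly bounded and equicontinuous on every bounded subset of `ℝ^m`. -/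
theorem stmt6 {m r : ℕ} (hm : 2 ≤ m) (hr : 1 ≤ r)
    (A : Fin r → Matrix (Fin m) (Fin m) ℝ) (hA : IsIrreducibleFamily A)
    (γ : ℝ → ℝ → ℝ) (hγ : IsAveraging γ)
    (N0 : (Fin m → ℝ) → ℝ) (hN0 : IsNorm N0)
    (e : Fin m → ℝ) (he : N0 e = 1)
    (Nstar : (Fin m → ℝ) → ℝ) (hNs : IsNorm Nstar)
    (hbar : ∀ x, jsr A * Nstar x = maxA A Nstar x) :
    (∀ (n : ℕ) (x : Fin m → ℝ),
        (ecc N0 Nstar)⁻¹ * (Nstar x / Nstar e) ≤ iterNnorm A γ N0 e n x ∧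
          iterNnorm A γ N0 e n x ≤ ecc N0 Nstar * (Nstar x / Nstar e)) ∧
      ∀ S : Set (Fin m → ℝ), IsBounded S →
        (∃ C : ℝ, ∀ (n : ℕ), ∀ x ∈ S, iterNnorm A γ N0 e n x ≤ C) ∧
          EquicontinuousOn (fun n : ℕ => iterNnorm A γ N0 e n) S :=
  stmt6_general A γ N0 hN0 e he Nstar hNs hbar
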